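/- arXiv:2105.11527 — 2 statements merged into one kernel-verified Lean document; each statement's English description precedes it below -/
import Mathlib

section
/- Consider the online constrained assignment algorithm on N instances with similarity vectors s_i ∈ R^K: initialize ρ^0 = 0 ∈ Δ_τ; at step i choose μ̃_i as the one-hot vector at argmax_k (s_{i,k} + ρ_k^{i-1}) and set ρ^i = Π_{Δ_τ}(ρ^{i-1} − η(μ̃_i − γ/N)), where γ/N = (γ_1/N,…,γ_K/N), ∑_k γ_k ≤ N, and Δ_τ = {ρ ∈ R^K : ρ ≥ 0, ‖ρ‖_1 ≤ τ}. Define L_i(μ, ρ) = ∑_k s_{i,k} μ_k + ∑_k ρ_k (μ_k − γ_k/N). Then for any fixed ρ ∈ Δ_τ and any sequence μ_1,…,μ_N with each μ_i in the simplex Δ', ∑_{i=1}^N [L_i(μ_i, ρ^{i-1}) − L_i(μ̃_i, ρ)] ≤ τ^2/(2η) + ηN. In particular, setting η = τ/√(2N) gives ∑_{i=1}^N [L_i(μ_i, ρ^{i-1}) − L_i(μ̃_i, ρ)] ≤ τ√(2N). -/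
lemma aux_sum_sq_le_sq_sum {K : ℕ} (f : Fin K → ℝ) (hf : ∀ k, 0 ≤ f k) :
    ∑ k, (f k)^2 ≤ (∑ k, f k)^2 := by
  have h : ∀ k ∈ Finset.univ, (f k)^2 ≤ f k * ∑ j, f j := by
    intro k _
    have := Finset.single_le_sum (fun j (_ : j ∈ Finset.univ) => hf j) (Finset.mem_univ k)
    nlinarith [hf k]
  calc ∑ k, (f k)^2 ≤ ∑ k, f k * ∑ j, f j := Finset.sum_le_sum h
    _ = (∑ k, f k)^2 := by rw [← Finset.sum_mul]; ring

lemma aux_tel : ∀ (M : ℕ) (D : Fin (M+1) → ℝ),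
    ∑ i : Fin M, (D i.castSucc - D i.succ) = D 0 - D (Fin.last M) := by
  intro M
  induction M with
  | zero => intro D; simp
  | succ n ih =>
    intro D
    rw [Fin.sum_univ_castSucc]
    have h := ih (fun j => D j.castSucc)
    simp only [Fin.succ_castSucc] at h ⊢
    rw [h]
    simp [Fin.succ_last]

lemma aux_proj {K : ℕ} {τ : ℝ} (p x y : Fin K → ℝ)
    (hp0 : ∀ k, 0 ≤ p k) (hps : ∑ k, p k ≤ τ)
    (hy0 : ∀ k, 0 ≤ y k) (hys : ∑ k, y k ≤ τ)
    (hmin : ∀ q : Fin K → ℝ, ((∀ k, 0 ≤ q k) ∧ ∑ k, q k ≤ τ) →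
      ∑ k, (p k - x k)^2 ≤ ∑ k, (q k - x k)^2) :
    ∑ k, (p k - y k)^2 ≤ ∑ k, (x k - y k)^2 := by
  set A := ∑ k, (p k - x k) * (y k - p k) with hA
  set B := ∑ k, (y k - p k)^2 with hB
  have hBnn : 0 ≤ B := Finset.sum_nonneg fun k _ => sq_nonneg _
  have key : ∀ t : ℝ, 0 ≤ t → t ≤ 1 → 0 ≤ 2*t*A + t^2*B := by
    intro t ht0 ht1
    have hmem1 : ∀ k, 0 ≤ p k + t*(y k - p k) := by
      intro k
      nlinarith [mul_nonneg (sub_nonneg.mpr ht1) (hp0 k), mul_nonneg ht0 (hy0 k)]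
    have hmem2 : ∑ k, (p k + t*(y k - p k)) ≤ τ := by
      have e : ∑ k, (p k + t*(y k - p k)) = (1-t) * ∑ k, p k + t * ∑ k, y k := by
        rw [Finset.mul_sum, Finset.mul_sum, ← Finset.sum_add_distrib]
        exact Finset.sum_congr rfl fun k _ => by ring
      rw [e]
      nlinarith [mul_nonneg (sub_nonneg.mpr ht1) (sub_nonneg.mpr hps),
        mul_nonneg ht0 (sub_nonneg.mpr hys)]
    have hq := hmin (fun k => p k + t*(y k - p k)) ⟨hmem1, hmem2⟩
    have e2 : ∑ k, (p k + t*(y k - p k) - x k)^2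
        = ∑ k, (p k - x k)^2 + 2*t*A + t^2*B := by
      rw [hA, hB, Finset.mul_sum, Finset.mul_sum, ← Finset.sum_add_distrib,
        ← Finset.sum_add_distrib]
      exact Finset.sum_congr rfl fun k _ => by ring
    rw [e2] at hq
    linarith
  have hAnn : 0 ≤ A := by
    by_contra hneg
    push_neg at hneg
    rcases eq_or_lt_of_le hBnn with hB0 | hBpos
    · have := key 1 zero_le_one le_rfl
      nlinarith
    · set t := min 1 (-A/B) with ht
      have ht0 : 0 < t := lt_min one_pos (div_pos (neg_pos.mpr hneg) hBpos)
      have ht1 : t ≤ 1 := min_le_left _ _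
      have htB : t ≤ -A/B := min_le_right _ _
      have hk := key t ht0.le ht1
      have hdb : (-A/B)*B = -A := div_mul_cancel₀ _ (ne_of_gt hBpos)
      nlinarith [mul_le_mul_of_nonneg_right
        (mul_le_mul_of_nonneg_left htB ht0.le) hBpos.le,
        mul_pos ht0 (neg_pos.mpr hneg)]
  have e3 : ∑ k, (x k - y k)^2
      = ∑ k, (p k - y k)^2 + ∑ k, (p k - x k)^2 + 2*A := by
    rw [hA, Finset.mul_sum, ← Finset.sum_add_distrib, ← Finset.sum_add_distrib]
    exact Finset.sum_congr rfl fun k _ => by ring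
  have := Finset.sum_nonneg (fun k (_ : k ∈ Finset.univ) => sq_nonneg (p k - x k))
  linarith

/-- Deterministic Lagrangian regret bound for the online constrained
assignment algorithm. The algorithm starts from `ρ^0 = 0`, picks the one-hot
assignment `μ̃_i` at `argmax_k (s_{i,k} + ρ^{i-1}_k)`, and performs the projected dual
update `ρ^i = Π_{Δ_τ}(ρ^{i-1} − η(μ̃_i − γ/N))` onto
`Δ_τ = {ρ : ρ ≥ 0, ‖ρ‖₁ ≤ τ}` (characterized as the distance minimizer within `Δ_τ`).
For the Lagrangian `L_i(μ, ρ) = ∑_k s_{i,k} μ_k + ∑_k ρ_k (μ_k − γ_k/N)`, any fixed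
`ρ ∈ Δ_τ` and any sequence `μ_1,…,μ_N` in the simplex,
`∑_i [L_i(μ_i, ρ^{i-1}) − L_i(μ̃_i, ρ)] ≤ τ²/(2η) + ηN`; in particular setting
`η = τ/√(2N)` gives the bound `τ√(2N)`. -/
theorem online_lagrangian_regret_bound
    (N K : ℕ) (hN : 0 < N) (hK : 0 < K)
    (s : Fin N → Fin K → ℝ) (hs : ∀ i k, -1 ≤ s i k ∧ s i k ≤ 1)
    (γ : Fin K → ℝ) (hγ : ∀ k, 0 < γ k) (hγsum : ∑ k, γ k ≤ N)
    (τ η : ℝ) (hτ : 0 < τ) (hηpos : 0 < η)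
    (ρ : Fin (N + 1) → Fin K → ℝ) (hρ0 : ∀ k, ρ 0 k = 0)
    (asg : Fin N → Fin K)
    (hasg : ∀ (i : Fin N) (k : Fin K),
      s i k + ρ i.castSucc k ≤ s i (asg i) + ρ i.castSucc (asg i))
    (μt : Fin N → Fin K → ℝ)
    (hμt : ∀ i k, μt i k = if k = asg i then 1 else 0)
    (hmem : ∀ i : Fin N, (∀ k, 0 ≤ ρ i.succ k) ∧ ∑ k, ρ i.succ k ≤ τ)
    (hproj : ∀ (i : Fin N) (q : Fin K → ℝ), ((∀ k, 0 ≤ q k) ∧ ∑ k, q k ≤ τ) →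
      ∑ k, (ρ i.succ k - (ρ i.castSucc k - η * (μt i k - γ k / N))) ^ 2 ≤
        ∑ k, (q k - (ρ i.castSucc k - η * (μt i k - γ k / N))) ^ 2) :
    ∀ ρfix : Fin K → ℝ, ((∀ k, 0 ≤ ρfix k) ∧ ∑ k, ρfix k ≤ τ) →
    ∀ μ : Fin N → Fin K → ℝ,
      (∀ i, (∀ k, 0 ≤ μ i k ∧ μ i k ≤ 1) ∧ ∑ k, μ i k = 1) →
      (∑ i, ((∑ k, s i k * μ i k + ∑ k, ρ i.castSucc k * (μ i k - γ k / N))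
            - (∑ k, s i k * μt i k + ∑ k, ρfix k * (μt i k - γ k / N)))
          ≤ τ ^ 2 / (2 * η) + η * N) ∧
      (η = τ / Real.sqrt (2 * N) →
        ∑ i, ((∑ k, s i k * μ i k + ∑ k, ρ i.castSucc k * (μ i k - γ k / N))
            - (∑ k, s i k * μt i k + ∑ k, ρfix k * (μt i k - γ k / N)))
          ≤ τ * Real.sqrt (2 * N)) := by
  intro ρfix hfix μ hμ
  have hNpos : (0:ℝ) < (N:ℝ) := by exact_mod_cast hN
  set D : Fin (N+1) → ℝ := fun j => ∑ k, (ρ j k - ρfix k)^2 with hD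
  -- per-step bound
  have hstep : ∀ i : Fin N,
      ((∑ k, s i k * μ i k + ∑ k, ρ i.castSucc k * (μ i k - γ k / N))
        - (∑ k, s i k * μt i k + ∑ k, ρfix k * (μt i k - γ k / N)))
      ≤ (D i.castSucc - D i.succ)/(2*η) + η := by
    intro i
    have honehot : ∀ c : Fin K → ℝ, ∑ k, c k * μt i k = c (asg i) := by
      intro c
      simp [hμt, mul_ite, Finset.sum_ite_eq']
    obtain ⟨hμ1, hμ2⟩ := hμ i
    -- A: argmax property
    have hA : ∑ k, s i k * μ i k + ∑ k, ρ i.castSucc k * μ i k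
        ≤ s i (asg i) + ρ i.castSucc (asg i) := by
      have e : ∑ k, s i k * μ i k + ∑ k, ρ i.castSucc k * μ i k
          = ∑ k, (s i k + ρ i.castSucc k) * μ i k := by
        rw [← Finset.sum_add_distrib]
        exact Finset.sum_congr rfl fun k _ => by ring
      rw [e]
      calc ∑ k, (s i k + ρ i.castSucc k) * μ i k
          ≤ ∑ k, (s i (asg i) + ρ i.castSucc (asg i)) * μ i k :=
            Finset.sum_le_sum fun k _ =>
              mul_le_mul_of_nonneg_right (hasg i k) (hμ1 k).1
        _ = (s i (asg i) + ρ i.castSucc (asg i)) * ∑ k, μ i k := by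
            rw [Finset.mul_sum]
        _ = _ := by rw [hμ2]; ring
    -- B: OGD inner product bound
    have hB : ∑ k, (ρ i.castSucc k - ρfix k) * (μt i k - γ k / N)
        ≤ (D i.castSucc - D i.succ)/(2*η) + η := by
      have hproj2 := aux_proj (ρ i.succ)
        (fun k => ρ i.castSucc k - η * (μt i k - γ k / N)) ρfix
        (hmem i).1 (hmem i).2 hfix.1 hfix.2 (fun q hq => hproj i q hq)
      have hexp : ∑ k, ((ρ i.castSucc k - η * (μt i k - γ k / N)) - ρfix k)^2
          = D i.castSucc - 2*η*(∑ k, (ρ i.castSucc k - ρfix k) * (μt i k - γ k / N))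
            + η^2 * (∑ k, (μt i k - γ k / N)^2) := by
        rw [hD, Finset.mul_sum, Finset.mul_sum, ← Finset.sum_sub_distrib,
          ← Finset.sum_add_distrib]
        exact Finset.sum_congr rfl fun k _ => by ring
      have hg2 : ∑ k, (μt i k - γ k / N)^2 ≤ 2 := by
        have h1 : ∀ k ∈ Finset.univ, (μt i k - γ k / N)^2 ≤ (μt i k)^2 + (γ k / N)^2 := by
          intro k _
          have hm : 0 ≤ μt i k := by rw [hμt]; split <;> norm_num
          have hgn : 0 ≤ γ k / N := div_nonneg (hγ k).le hNpos.le
          nlinarith [mul_nonneg hm hgn]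
        have h2 : ∑ k, (μt i k)^2 = 1 := by
          simp [hμt, ite_pow, Finset.sum_ite_eq']
        have h3 : ∑ k, (γ k / N)^2 ≤ 1 := by
          have h4 : ∑ k, (γ k / N)^2 ≤ (∑ k, γ k / N)^2 :=
            aux_sum_sq_le_sq_sum _ (fun k => div_nonneg (hγ k).le hNpos.le)
          have h5 : ∑ k, γ k / N = (∑ k, γ k) / N := by rw [Finset.sum_div]
          have h6 : (0:ℝ) ≤ ∑ k, γ k / N :=
            Finset.sum_nonneg fun k _ => div_nonneg (hγ k).le hNpos.le
          have h7 : ∑ k, γ k / N ≤ 1 := by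
            rw [h5]; exact (div_le_one hNpos).mpr hγsum
          nlinarith
        calc ∑ k, (μt i k - γ k / N)^2
            ≤ ∑ k, ((μt i k)^2 + (γ k / N)^2) := Finset.sum_le_sum h1
          _ = ∑ k, (μt i k)^2 + ∑ k, (γ k / N)^2 := Finset.sum_add_distrib
          _ ≤ 2 := by rw [h2]; linarith
      rw [hexp] at hproj2
      have hDsucc : D i.succ = ∑ k, (ρ i.succ k - ρfix k)^2 := rfl
      have h2η : (0:ℝ) < 2*η := by linarith
      rw [← hDsucc] at hproj2
      have hkey : 2*η*(∑ k, (ρ i.castSucc k - ρfix k) * (μt i k - γ k / N))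
          ≤ D i.castSucc - D i.succ + 2*η^2 := by nlinarith
      calc ∑ k, (ρ i.castSucc k - ρfix k) * (μt i k - γ k / N)
          = (2*η*(∑ k, (ρ i.castSucc k - ρfix k) * (μt i k - γ k / N)))/(2*η) := by
            rw [mul_div_cancel_left₀ _ h2η.ne']
        _ ≤ (D i.castSucc - D i.succ + 2*η^2)/(2*η) :=
            (div_le_div_iff_of_pos_right h2η).mpr hkey
        _ = (D i.castSucc - D i.succ)/(2*η) + η := by field_simp
    -- combine
    have hs1 : ∑ k, s i k * μt i k = s i (asg i) := honehot _
    have hs2 : ∑ k, ρfix k * (μt i k - γ k / N)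
        = ρfix (asg i) - ∑ k, ρfix k * (γ k / N) := by
      rw [← honehot (fun k => ρfix k), ← Finset.sum_sub_distrib]
      exact Finset.sum_congr rfl fun k _ => by ring
    have hs3 : ∑ k, ρ i.castSucc k * (μ i k - γ k / N)
        = ∑ k, ρ i.castSucc k * μ i k - ∑ k, ρ i.castSucc k * (γ k / N) := by
      rw [← Finset.sum_sub_distrib]
      exact Finset.sum_congr rfl fun k _ => by ring
    have hs4 : ∑ k, (ρ i.castSucc k - ρfix k) * (μt i k - γ k / N)
        = ρ i.castSucc (asg i) - ∑ k, ρ i.castSucc k * (γ k / N)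
          - ρfix (asg i) + ∑ k, ρfix k * (γ k / N) := by
      have e : ∀ k, (ρ i.castSucc k - ρfix k) * (μt i k - γ k / N)
          = (ρ i.castSucc k * μt i k - ρ i.castSucc k * (γ k / N)
            - ρfix k * μt i k) + ρfix k * (γ k / N) := fun k => by ring
      rw [Finset.sum_congr rfl (fun k _ => e k), Finset.sum_add_distrib,
        Finset.sum_sub_distrib, Finset.sum_sub_distrib,
        honehot (fun k => ρ i.castSucc k), honehot (fun k => ρfix k)]
    rw [hs1, hs2, hs3]
    rw [hs4] at hB
    linarith
  -- sum the per-step bounds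
  have hsum : ∑ i, ((∑ k, s i k * μ i k + ∑ k, ρ i.castSucc k * (μ i k - γ k / N))
        - (∑ k, s i k * μt i k + ∑ k, ρfix k * (μt i k - γ k / N)))
      ≤ ∑ i : Fin N, ((D i.castSucc - D i.succ)/(2*η) + η) :=
    Finset.sum_le_sum fun i _ => hstep i
  have htel : ∑ i : Fin N, ((D i.castSucc - D i.succ)/(2*η) + η)
      = (D 0 - D (Fin.last N))/(2*η) + η * N := by
    rw [Finset.sum_add_distrib, ← Finset.sum_div, aux_tel N D]
    simp [mul_comm]
  have hD0 : D 0 ≤ τ^2 := by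
    have e : D 0 = ∑ k, (ρfix k)^2 := by
      rw [hD]
      exact Finset.sum_congr rfl fun k _ => by rw [hρ0 k]; ring
    rw [e]
    have h1 := aux_sum_sq_le_sq_sum ρfix hfix.1
    have h2 : (0:ℝ) ≤ ∑ k, ρfix k := Finset.sum_nonneg fun k _ => hfix.1 k
    nlinarith [hfix.2]
  have hDlast : 0 ≤ D (Fin.last N) := Finset.sum_nonneg fun k _ => sq_nonneg _
  have h2η : (0:ℝ) < 2*η := by linarith
  have hmain : ∑ i, ((∑ k, s i k * μ i k + ∑ k, ρ i.castSucc k * (μ i k - γ k / N))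
        - (∑ k, s i k * μt i k + ∑ k, ρfix k * (μt i k - γ k / N)))
      ≤ τ ^ 2 / (2 * η) + η * N := by
    have hd : (D 0 - D (Fin.last N))/(2*η) ≤ τ^2/(2*η) := by
      exact (div_le_div_iff_of_pos_right h2η).mpr (by linarith)
    rw [htel] at hsum
    linarith
  refine ⟨hmain, fun hη => ?_⟩
  have hr : (0:ℝ) < Real.sqrt (2*N) := Real.sqrt_pos.mpr (by positivity)
  have hr2 : (Real.sqrt (2*N))^2 = 2*N := Real.sq_sqrt (by positivity)
  have heq : τ^2/(2*η) + η*N = τ * Real.sqrt (2*N) := by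
    have hrne : Real.sqrt (2*N) ≠ 0 := ne_of_gt hr
    have hτne : τ ≠ 0 := ne_of_gt hτ
    have ha : (Real.sqrt 2)^2 = 2 := Real.sq_sqrt (by norm_num)
    have hb : (Real.sqrt (N:ℝ))^2 = (N:ℝ) := Real.sq_sqrt hNpos.le
    rw [hη]
    field_simp
    ring_nf
    rw [Real.sq_sqrt (by positivity)]
    ring
  linarith [hmain]
end

section
/- In the online constrained assignment setting, let μ* (with each μ*_i in the simplex Δ', feasible: ∑_i μ*_{i,k} ≥ γ_k for all k) be given, let μ̃_1,…,μ̃_N and ρ^0 = 0, ρ^1,…,ρ^{N-1} ∈ Δ_τ be produced by the online algorithm (one-hot assignment at argmax_k (s_{i,k} + ρ_k^{i-1}), projected dual update with step size η = τ/√(2N)). Define R(μ̃) = ∑_{i,k} s_{i,k} μ*_{i,k} − ∑_{i,k} s_{i,k} μ̃_{i,k} and V(μ̃) = max_k (γ_k − ∑_i μ̃_{i,k}). Then, deterministically, R(μ̃) + τ·max(V(μ̃), 0) ≤ ∑_{i=1}^N ∑_{k=1}^K ρ_k^{i-1} (γ_k/N − μ*_{i,k}) + τ√(2N). -/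
lemma proj_key {K : ℕ} {τ : ℝ} (p y r : Fin K → ℝ)
    (hp1 : ∀ k, 0 ≤ p k) (hp2 : ∑ k, p k ≤ τ)
    (hr1 : ∀ k, 0 ≤ r k) (hr2 : ∑ k, r k ≤ τ)
    (hmin : ∀ q : Fin K → ℝ, ((∀ k, 0 ≤ q k) ∧ ∑ k, q k ≤ τ) →
        ∑ k, (p k - y k) ^ 2 ≤ ∑ k, (q k - y k) ^ 2) :
    ∑ k, (p k - r k) ^ 2 ≤ ∑ k, (y k - r k) ^ 2 := by
  set c := ∑ k, (p k - y k) * (r k - p k) with hc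
  set d := ∑ k, (r k - p k) ^ 2 with hd
  have hd0 : 0 ≤ d := Finset.sum_nonneg fun k _ => sq_nonneg _
  have key : ∀ t : ℝ, 0 ≤ t → t ≤ 1 → 0 ≤ 2 * t * c + t ^ 2 * d := by
    intro t ht0 ht1
    have hmem : (∀ k, 0 ≤ p k + t * (r k - p k)) ∧ ∑ k, (p k + t * (r k - p k)) ≤ τ := by
      constructor
      · intro k
        have := hp1 k; have := hr1 k
        nlinarith
      · have hsum : ∑ k, (p k + t * (r k - p k))
            = (1 - t) * ∑ k, p k + t * ∑ k, r k := by
          rw [Finset.mul_sum, Finset.mul_sum, ← Finset.sum_add_distrib]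
          exact Finset.sum_congr rfl fun k _ => by ring
        rw [hsum]; nlinarith
    have hq := hmin (fun k => p k + t * (r k - p k)) hmem
    have expand : ∑ k, ((p k + t * (r k - p k)) - y k) ^ 2
        = ∑ k, (p k - y k) ^ 2 + (2 * t * c + t ^ 2 * d) := by
      rw [hc, hd, Finset.mul_sum, Finset.mul_sum, ← Finset.sum_add_distrib,
        ← Finset.sum_add_distrib]
      exact Finset.sum_congr rfl fun k _ => by ring
    rw [expand] at hq
    linarith
  have hcnn : 0 ≤ c := by
    by_contra h
    push_neg at h
    rcases eq_or_lt_of_le hd0 with hdz | hdp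
    · have := key 1 zero_le_one le_rfl
      nlinarith
    · set t := min 1 (-c / d) with ht
      have ht0 : 0 < t := lt_min one_pos (div_pos (neg_pos.2 h) hdp)
      have ht1 : t ≤ 1 := min_le_left _ _
      have htd : t * d ≤ -c := by
        have ht2 : t ≤ -c / d := min_le_right _ _
        exact (le_div_iff₀ hdp).mp ht2
      have hkey := key t ht0.le ht1
      nlinarith [mul_le_mul_of_nonneg_left htd ht0.le, mul_pos ht0 (neg_pos.2 h)]
  have final : ∑ k, (y k - r k) ^ 2
      = ∑ k, (p k - r k) ^ 2 + (∑ k, (y k - p k) ^ 2 + 2 * c) := by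
    rw [hc, Finset.mul_sum, ← Finset.sum_add_distrib, ← Finset.sum_add_distrib]
    exact Finset.sum_congr rfl fun k _ => by ring
  have hyp : 0 ≤ ∑ k, (y k - p k) ^ 2 := Finset.sum_nonneg fun k _ => sq_nonneg _
  linarith


/-- Deterministic combined regret–violation inequality for the online
constrained assignment algorithm with step size `η = τ/√(2N)`. With
`R(μ̃) = ∑_{i,k} s_{i,k} μ*_{i,k} − ∑_{i,k} s_{i,k} μ̃_{i,k}` and
`V(μ̃) = max_k (γ_k − ∑_i μ̃_{i,k})`,
`R(μ̃) + τ·max(V(μ̃), 0) ≤ ∑_i ∑_k ρ^{i-1}_k (γ_k/N − μ*_{i,k}) + τ√(2N)`. -/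
theorem online_regret_violation_inequality
    (N K : ℕ) (hN : 0 < N) (hK : 0 < K)
    (s : Fin N → Fin K → ℝ) (hs : ∀ i k, -1 ≤ s i k ∧ s i k ≤ 1)
    (γ : Fin K → ℝ) (hγ : ∀ k, 0 < γ k) (hγsum : ∑ k, γ k ≤ N)
    (τ η : ℝ) (hτ : 0 < τ) (hη : η = τ / Real.sqrt (2 * N))
    (μstar : Fin N → Fin K → ℝ)
    (hμstar_simplex : ∀ i, (∀ k, 0 ≤ μstar i k ∧ μstar i k ≤ 1) ∧ ∑ k, μstar i k = 1)
    (hμstar_feas : ∀ k, γ k ≤ ∑ i, μstar i k)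
    (ρ : Fin (N + 1) → Fin K → ℝ) (hρ0 : ∀ k, ρ 0 k = 0)
    (asg : Fin N → Fin K)
    (hasg : ∀ (i : Fin N) (k : Fin K),
      s i k + ρ i.castSucc k ≤ s i (asg i) + ρ i.castSucc (asg i))
    (μt : Fin N → Fin K → ℝ)
    (hμt : ∀ i k, μt i k = if k = asg i then 1 else 0)
    (hmem : ∀ i : Fin N, (∀ k, 0 ≤ ρ i.succ k) ∧ ∑ k, ρ i.succ k ≤ τ)
    (hproj : ∀ (i : Fin N) (q : Fin K → ℝ), ((∀ k, 0 ≤ q k) ∧ ∑ k, q k ≤ τ) →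
      ∑ k, (ρ i.succ k - (ρ i.castSucc k - η * (μt i k - γ k / N))) ^ 2 ≤
        ∑ k, (q k - (ρ i.castSucc k - η * (μt i k - γ k / N))) ^ 2) :
    (∑ i, ∑ k, s i k * μstar i k - ∑ i, ∑ k, s i k * μt i k)
      + τ * max (Finset.univ.sup' ⟨⟨0, hK⟩, Finset.mem_univ _⟩
          (fun k => γ k - ∑ i, μt i k)) 0
      ≤ ∑ i, ∑ k, ρ i.castSucc k * (γ k / N - μstar i k) + τ * Real.sqrt (2 * N) := by
  have hNpos : (0:ℝ) < N := by exact_mod_cast hN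
  set S := Real.sqrt (2 * N) with hS
  have hSpos : 0 < S := Real.sqrt_pos.2 (by positivity)
  have hS2 : S ^ 2 = 2 * N := Real.sq_sqrt (by positivity)
  have hηpos : 0 < η := by rw [hη]; positivity
  -- one-hot facts
  have hμtsum : ∀ i, ∑ k, μt i k = 1 := by
    intro i
    simp [hμt]
  have hμtnn : ∀ i k, 0 ≤ μt i k := by
    intro i k; rw [hμt]; split <;> norm_num
  have hγN : ∀ k, 0 ≤ γ k / N := fun k => div_nonneg (hγ k).le hNpos.le
  have hγNsum : ∑ k, γ k / (N:ℝ) ≤ 1 := by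
    rw [← Finset.sum_div, div_le_one hNpos]; exact hγsum
  -- gradient squared norm bound
  have hEi : ∀ i : Fin N, ∑ k, (μt i k - γ k / N) ^ 2 ≤ 2 := by
    intro i
    have expand : ∑ k, (μt i k - γ k / N) ^ 2
        = ∑ k, (μt i k) ^ 2 - 2 * ∑ k, μt i k * (γ k / N) + ∑ k, (γ k / N) ^ 2 := by
      rw [Finset.mul_sum, ← Finset.sum_sub_distrib, ← Finset.sum_add_distrib]
      exact Finset.sum_congr rfl fun k _ => by ring
    have h1 : ∑ k, (μt i k) ^ 2 = 1 := by
      have hterm : ∀ k : Fin K, (μt i k) ^ 2 = μt i k := by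
        intro k; rw [hμt]; split <;> norm_num
      rw [Finset.sum_congr rfl fun k _ => hterm k, hμtsum]
    have h2 : 0 ≤ ∑ k, μt i k * (γ k / N) :=
      Finset.sum_nonneg fun k _ => mul_nonneg (hμtnn i k) (hγN k)
    have h3 : ∑ k, (γ k / (N:ℝ)) ^ 2 ≤ 1 := by
      have step : ∀ k : Fin K, (γ k / (N:ℝ)) ^ 2 ≤ (γ k / N) * (∑ j, γ j / N) := by
        intro k
        have hk : γ k / (N:ℝ) ≤ ∑ j, γ j / N :=
          Finset.single_le_sum (f := fun j => γ j / (N:ℝ)) (fun j _ => hγN j)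
            (Finset.mem_univ k)
        nlinarith [hγN k]
      calc ∑ k, (γ k / (N:ℝ)) ^ 2 ≤ ∑ k, (γ k / N) * (∑ j, γ j / N) :=
            Finset.sum_le_sum fun k _ => step k
        _ = (∑ k, γ k / (N:ℝ)) * (∑ j, γ j / N) := by rw [← Finset.sum_mul]
        _ ≤ 1 * 1 := mul_le_mul hγNsum hγNsum (Finset.sum_nonneg fun k _ => hγN k) zero_le_one
        _ = 1 := one_mul 1
    rw [expand]; linarith
  -- per-round primal optimality
  have stepA : ∀ i : Fin N,
      ∑ k, (s i k + ρ i.castSucc k) * μstar i k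
        ≤ ∑ k, (s i k + ρ i.castSucc k) * μt i k := by
    intro i
    have hrhs : ∑ k, (s i k + ρ i.castSucc k) * μt i k
        = s i (asg i) + ρ i.castSucc (asg i) := by
      have hterm : ∀ k : Fin K, (s i k + ρ i.castSucc k) * μt i k
          = if k = asg i then s i (asg i) + ρ i.castSucc (asg i) else 0 := by
        intro k; rw [hμt]
        by_cases h : k = asg i
        · subst h; simp
        · simp [h]
      rw [Finset.sum_congr rfl fun k _ => hterm k]
      simp
    rw [hrhs]
    calc ∑ k, (s i k + ρ i.castSucc k) * μstar i k
        ≤ ∑ k, (s i (asg i) + ρ i.castSucc (asg i)) * μstar i k :=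
          Finset.sum_le_sum fun k _ =>
            mul_le_mul_of_nonneg_right (hasg i k) ((hμstar_simplex i).1 k).1
      _ = (s i (asg i) + ρ i.castSucc (asg i)) * ∑ k, μstar i k := by
          rw [Finset.mul_sum]
      _ = s i (asg i) + ρ i.castSucc (asg i) := by rw [(hμstar_simplex i).2, mul_one]
  -- OGD regret bound
  open Fin.NatCast in
  have OGD : ∀ r : Fin K → ℝ, (∀ k, 0 ≤ r k) → (∑ k, r k ≤ τ) → (∑ k, (r k) ^ 2 ≤ τ ^ 2) →
      ∑ i, ∑ k, (ρ i.castSucc k - r k) * (μt i k - γ k / N) ≤ τ * S := by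
    intro r hr1 hr2 hr3
    set D : ℕ → ℝ := fun j => ∑ k, (ρ (j : Fin (N + 1)) k - r k) ^ 2 with hD
    have step : ∀ i : Fin N,
        2 * η * (∑ k, (ρ i.castSucc k - r k) * (μt i k - γ k / N))
          ≤ D i.val - D (i.val + 1) + η ^ 2 * 2 := by
      intro i
      have hc1 : ((i.val : ℕ) : Fin (N + 1)) = i.castSucc := by
        ext
        simp [Fin.val_natCast, Nat.mod_eq_of_lt (Nat.lt_succ_of_lt i.isLt)]
      have hc2 : ((i.val + 1 : ℕ) : Fin (N + 1)) = i.succ := by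
        ext
        simp [Fin.val_natCast, Nat.mod_eq_of_lt (Nat.succ_lt_succ i.isLt)]
      have hp := proj_key (ρ i.succ) (fun k => ρ i.castSucc k - η * (μt i k - γ k / N)) r
        (hmem i).1 (hmem i).2 hr1 hr2 (fun q hq => hproj i q hq)
      have expand : ∑ k, ((ρ i.castSucc k - η * (μt i k - γ k / N)) - r k) ^ 2
          = ∑ k, (ρ i.castSucc k - r k) ^ 2
            - 2 * η * (∑ k, (ρ i.castSucc k - r k) * (μt i k - γ k / N))
            + η ^ 2 * ∑ k, (μt i k - γ k / N) ^ 2 := by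
        rw [Finset.mul_sum, Finset.mul_sum, ← Finset.sum_sub_distrib, ← Finset.sum_add_distrib]
        exact Finset.sum_congr rfl fun k _ => by ring
      have e1 : D i.val = ∑ k, (ρ i.castSucc k - r k) ^ 2 := by rw [hD]; simp only [hc1]
      have e2 : D (i.val + 1) = ∑ k, (ρ i.succ k - r k) ^ 2 := by
        rw [hD]; simp only [hc2]
      rw [e1, e2]
      have hE := hEi i
      have hp' := hp
      rw [expand] at hp'
      nlinarith [sq_nonneg η, mul_le_mul_of_nonneg_left hE (sq_nonneg η)]
    have telescope : ∑ i : Fin N, (D i.val - D (i.val + 1)) = D 0 - D N := by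
      rw [Fin.sum_univ_eq_sum_range (fun j => D j - D (j + 1)) N]
      exact Finset.sum_range_sub' D N
    have hsum : 2 * η * ∑ i, ∑ k, (ρ i.castSucc k - r k) * (μt i k - γ k / N)
        ≤ D 0 - D N + (N : ℝ) * (η ^ 2 * 2) := by
      rw [Finset.mul_sum]
      calc ∑ i, 2 * η * (∑ k, (ρ i.castSucc k - r k) * (μt i k - γ k / N))
          ≤ ∑ i : Fin N, (D i.val - D (i.val + 1) + η ^ 2 * 2) :=
            Finset.sum_le_sum fun i _ => step i
        _ = (D 0 - D N) + (N : ℝ) * (η ^ 2 * 2) := by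
            rw [Finset.sum_add_distrib, telescope, Finset.sum_const, Finset.card_univ,
              Fintype.card_fin, nsmul_eq_mul]
    have hD0 : D 0 ≤ τ ^ 2 := by
      have : D 0 = ∑ k, (r k) ^ 2 := by
        rw [hD]
        simp [hρ0]
      rw [this]; exact hr3
    have hDN : 0 ≤ D N := Finset.sum_nonneg fun k _ => sq_nonneg _
    have hbound : 2 * η * ∑ i, ∑ k, (ρ i.castSucc k - r k) * (μt i k - γ k / N)
        ≤ τ ^ 2 + 2 * N * η ^ 2 := by nlinarith
    have hval : τ ^ 2 + 2 * (N:ℝ) * η ^ 2 = (τ * S) * (2 * η) := by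
      have h1 : τ = η * S := by rw [hη]; field_simp
      rw [h1]
      linear_combination (-η ^ 2) * hS2
    rw [hval] at hbound
    have := (mul_le_mul_iff_left₀ (by positivity : (0:ℝ) < 2 * η)).mp (by linarith : (∑ i, ∑ k, (ρ i.castSucc k - r k) * (μt i k - γ k / N)) * (2 * η) ≤ (τ * S) * (2 * η))
    linarith
  -- abbreviations
  set A1 := ∑ i, ∑ k, s i k * μstar i k with hA1
  set A2 := ∑ i, ∑ k, s i k * μt i k with hA2
  set B1 := ∑ i, ∑ k, ρ i.castSucc k * μstar i k with hB1
  set B2 := ∑ i, ∑ k, ρ i.castSucc k * μt i k with hB2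
  set C := ∑ i : Fin N, ∑ k : Fin K, ρ i.castSucc k * (γ k / (N:ℝ)) with hC
  have hP : ∑ i, ∑ k, ρ i.castSucc k * (γ k / N - μstar i k) = C - B1 := by
    rw [hC, hB1, ← Finset.sum_sub_distrib]
    refine Finset.sum_congr rfl fun i _ => ?_
    rw [← Finset.sum_sub_distrib]
    exact Finset.sum_congr rfl fun k _ => by ring
  have hA : A1 + B1 ≤ A2 + B2 := by
    have h : ∑ i : Fin N, ∑ k : Fin K, (s i k + ρ i.castSucc k) * μstar i k
        ≤ ∑ i : Fin N, ∑ k : Fin K, (s i k + ρ i.castSucc k) * μt i k :=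
      Finset.sum_le_sum fun i _ => stepA i
    have e1 : ∑ i, ∑ k, (s i k + ρ i.castSucc k) * μstar i k = A1 + B1 := by
      rw [hA1, hB1, ← Finset.sum_add_distrib]
      refine Finset.sum_congr rfl fun i _ => ?_
      rw [← Finset.sum_add_distrib]
      exact Finset.sum_congr rfl fun k _ => by ring
    have e2 : ∑ i, ∑ k, (s i k + ρ i.castSucc k) * μt i k = A2 + B2 := by
      rw [hA2, hB2, ← Finset.sum_add_distrib]
      refine Finset.sum_congr rfl fun i _ => ?_
      rw [← Finset.sum_add_distrib]
      exact Finset.sum_congr rfl fun k _ => by ring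
    rw [e1, e2] at h
    exact h
  -- choose comparator r and conclude
  set V := Finset.univ.sup' ⟨⟨0, hK⟩, Finset.mem_univ _⟩ (fun k => γ k - ∑ i, μt i k) with hV
  have decomp : ∀ r : Fin K → ℝ,
      ∑ i, ∑ k, (ρ i.castSucc k - r k) * (μt i k - γ k / N)
        = (B2 - C) - ∑ i, ∑ k, r k * (μt i k - γ k / N) := by
    intro r
    rw [hB2, hC, ← Finset.sum_sub_distrib, ← Finset.sum_sub_distrib]
    refine Finset.sum_congr rfl fun i _ => ?_
    rw [← Finset.sum_sub_distrib, ← Finset.sum_sub_distrib]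
    exact Finset.sum_congr rfl fun k _ => by ring
  rw [hP]
  rcases le_or_gt V 0 with hVle | hVpos
  · rw [max_eq_right hVle]
    have hO := OGD (fun _ => 0) (fun k => le_rfl) (by simpa using hτ.le)
      (by simp; positivity)
    rw [decomp] at hO
    have hzero : ∑ i, ∑ k, (0:ℝ) * (μt i k - γ k / N) = 0 := by simp
    rw [hzero] at hO
    linarith
  · rw [max_eq_left hVpos.le]
    obtain ⟨kst, -, hkst⟩ := Finset.exists_mem_eq_sup' (⟨⟨0, hK⟩, Finset.mem_univ _⟩ :
      (Finset.univ : Finset (Fin K)).Nonempty) (fun k => γ k - ∑ i, μt i k)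
    set r : Fin K → ℝ := fun k => if k = kst then τ else 0 with hr
    have hr1 : ∀ k, 0 ≤ r k := by intro k; rw [hr]; dsimp only; split <;> [exact hτ.le; exact le_rfl]
    have hr2 : ∑ k, r k ≤ τ := by rw [hr]; simp
    have hr3 : ∑ k, (r k) ^ 2 ≤ τ ^ 2 := by
      rw [hr]
      have : ∀ k : Fin K, ((if k = kst then τ else 0):ℝ) ^ 2 = if k = kst then τ ^ 2 else 0 := by
        intro k; split <;> norm_num
      rw [Finset.sum_congr rfl fun k _ => this k]
      simp
    have hO := OGD r hr1 hr2 hr3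
    rw [decomp] at hO
    have hrg : ∑ i, ∑ k, r k * (μt i k - γ k / N) = -(τ * V) := by
      have hin : ∀ i : Fin N, ∑ k, r k * (μt i k - γ k / N) = τ * (μt i kst - γ kst / N) := by
        intro i
        rw [hr]
        have : ∀ k : Fin K, (if k = kst then τ else (0:ℝ)) * (μt i k - γ k / N)
            = if k = kst then τ * (μt i kst - γ kst / N) else 0 := by
          intro k
          by_cases h : k = kst
          · subst h; simp
          · simp [h]
        rw [Finset.sum_congr rfl fun k _ => this k]
        simp
      rw [Finset.sum_congr rfl fun i _ => hin i, ← Finset.mul_sum, Finset.sum_sub_distrib,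
        Finset.sum_const, Finset.card_univ, Fintype.card_fin, nsmul_eq_mul]
      have hNγ : (N : ℝ) * (γ kst / N) = γ kst := by field_simp
      rw [hNγ, hV, hkst]
      ring
    rw [hrg] at hO
    linarith
end
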